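/- Let M, N be positive integers with N ≥ 2, h > 0, τ > 0, and μ, γ, κ, ν ∈ ℝ. Suppose the periodic grid functions u^k, v^k (0 ≤ k ≤ N) satisfy the compact scheme. Define the discrete energy E(u^{k+1},u^k) = (1/2)·(‖u^{k+1}‖² + ‖u^k‖²) + 2ντ·∑_{l=1}^{k}(|u^{l̄}|₁² + (h²/12)·‖v^{l̄}‖² − (h⁴/144)·|v^{l̄}|₁²) + (μ/2)·[(|u^{k+1}|₁² + |u^k|₁²) + (h²/12)·(‖v^{k+1}‖² + ‖v^k‖²) − (h⁴/144)·(|v^{k+1}|₁² + |v^k|₁²)], where w^{l̄} = (w^{l−1} + w^{l+1})/2. Then E(u^{k+1},u^k) = E(u¹,u⁰) for all 1 ≤ k ≤ N−1. (Theorem 4.1, conservative invariant (22).) -/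

import Mathlib

open Finset

namespace BBMB

/-- A periodic grid function with period `M`. -/
def Periodic (M : ℕ) (u : ℤ → ℝ) : Prop := ∀ i : ℤ, u (i + (M : ℤ)) = u i

/-- Forward difference `δ_x u_{i+1/2} = (u_{i+1} - u_i)/h`. -/
noncomputable def dxp (h : ℝ) (u : ℤ → ℝ) (i : ℤ) : ℝ := (u (i + 1) - u i) / h

/-- Backward difference `δ_x u_{i-1/2} = (u_i - u_{i-1})/h`. -/
noncomputable def dxm (h : ℝ) (u : ℤ → ℝ) (i : ℤ) : ℝ := (u i - u (i - 1)) / h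

/-- Second difference `δ_x² u_i = (u_{i+1} - 2 u_i + u_{i-1})/h²`. -/
noncomputable def dxx (h : ℝ) (u : ℤ → ℝ) (i : ℤ) : ℝ :=
  (u (i + 1) - 2 * u i + u (i - 1)) / h ^ 2

/-- Centered difference `Δ_x u_i = (u_{i+1} - u_{i-1})/(2h)`. -/
noncomputable def Dx (h : ℝ) (u : ℤ → ℝ) (i : ℤ) : ℝ := (u (i + 1) - u (i - 1)) / (2 * h)

/-- Discrete inner product `(u, w) = h ∑_{i=1}^{M} u_i w_i`. -/
noncomputable def ip (M : ℕ) (h : ℝ) (u w : ℤ → ℝ) : ℝ :=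
  h * ∑ i ∈ Finset.Icc (1 : ℤ) (M : ℤ), u i * w i

/-- Discrete inner product `⟨δ_x u, δ_x w⟩ = h ∑_{i=1}^{M} (δ_x u_{i-1/2})(δ_x w_{i-1/2})`. -/
noncomputable def dip (M : ℕ) (h : ℝ) (u w : ℤ → ℝ) : ℝ :=
  h * ∑ i ∈ Finset.Icc (1 : ℤ) (M : ℤ), dxm h u i * dxm h w i

/-- Discrete `L²` norm `‖u‖ = √((u,u))`. -/
noncomputable def nrm (M : ℕ) (h : ℝ) (u : ℤ → ℝ) : ℝ := Real.sqrt (ip M h u u)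

/-- Discrete `H¹` seminorm `|u|₁ = √(⟨δ_x u, δ_x u⟩)`. -/
noncomputable def snorm (M : ℕ) (h : ℝ) (u : ℤ → ℝ) : ℝ := Real.sqrt (dip M h u u)

/-- Trilinear term `ψ(u,v)_i = (1/3) (u_i Δ_x v_i + Δ_x (u·v)_i)`. -/
noncomputable def psi (h : ℝ) (u v : ℤ → ℝ) (i : ℤ) : ℝ :=
  (1 / 3) * (u i * Dx h v i + Dx h (fun j => u j * v j) i)

/-- Average of two grid functions. -/
noncomputable def half (w0 w1 : ℤ → ℝ) : ℤ → ℝ := fun i => (w0 i + w1 i) / 2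

/-- The three-level linearized compact difference scheme (17)–(20a). -/
def SatisfiesScheme (M N : ℕ) (h τ μ γ κ ν : ℝ) (u v : ℕ → ℤ → ℝ) : Prop :=
  (∀ k ≤ N, Periodic M (u k) ∧ Periodic M (v k)) ∧
  (∀ k ≤ N, ∀ i : ℤ, v k i = dxx h (u k) i - h ^ 2 / 12 * dxx h (v k) i) ∧
  (∀ i : ℤ,
    (u 1 i - u 0 i) / τ - μ * (v 1 i - v 0 i) / τ
      + γ * (psi h (u 0) (half (u 0) (u 1)) i
             - h ^ 2 / 2 * psi h (v 0) (half (u 0) (u 1)) i)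
      + κ * (Dx h (half (u 0) (u 1)) i - h ^ 2 / 6 * Dx h (half (v 0) (v 1)) i)
      - ν * half (v 0) (v 1) i = 0) ∧
  (∀ k : ℕ, 1 ≤ k → k + 1 ≤ N → ∀ i : ℤ,
    (u (k + 1) i - u (k - 1) i) / (2 * τ) - μ * (v (k + 1) i - v (k - 1) i) / (2 * τ)
      + γ * (psi h (u k) (half (u (k - 1)) (u (k + 1))) i
             - h ^ 2 / 2 * psi h (v k) (half (u (k - 1)) (u (k + 1))) i)
      + κ * (Dx h (half (u (k - 1)) (u (k + 1))) i
             - h ^ 2 / 6 * Dx h (half (v (k - 1)) (v (k + 1))) i)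
      - ν * half (v (k - 1)) (v (k + 1)) i = 0)

/-- The discrete energy `E(u^{k+1}, u^k)`. -/
noncomputable def energyE (M : ℕ) (h τ μ ν : ℝ) (u v : ℕ → ℤ → ℝ) (k : ℕ) : ℝ :=
  1 / 2 * ((nrm M h (u (k + 1))) ^ 2 + (nrm M h (u k)) ^ 2)
    + 2 * ν * τ * ∑ l ∈ Finset.Icc 1 k,
        ((snorm M h (half (u (l - 1)) (u (l + 1)))) ^ 2
          + h ^ 2 / 12 * (nrm M h (half (v (l - 1)) (v (l + 1)))) ^ 2
          - h ^ 4 / 144 * (snorm M h (half (v (l - 1)) (v (l + 1)))) ^ 2)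
    + μ / 2 * (((snorm M h (u (k + 1))) ^ 2 + (snorm M h (u k)) ^ 2)
        + h ^ 2 / 12 * ((nrm M h (v (k + 1))) ^ 2 + (nrm M h (v k)) ^ 2)
        - h ^ 4 / 144 * ((snorm M h (v (k + 1))) ^ 2 + (snorm M h (v k)) ^ 2))

/-!
Pair the three-level scheme with `2τ ū`, where `ū = (u^{k-1} + u^{k+1})/2`. On periodic grid
functions summation by parts makes `Δ_x` skew-adjoint and `δ_x²` self-adjoint, so the `γ`- and
`κ`-terms vanish. The compact relation `v = δ_x² u - (h²/12) δ_x² v` gives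
`(u, v) = -(|u|₁² + (h²/12)‖v‖² - (h⁴/144)|v|₁²)` and `(u, v') = (v, u')` for two such pairs, which
turns the `μ`- and `ν`-terms into differences of that quadratic form. What remains is
`E(u^{k+1}, u^k) = E(u^k, u^{k-1})`.
-/

theorem sum_Icc_comp_add_one_of_periodic {β : Type*} [AddCancelCommMonoid β] {M : ℕ}
    {f : ℤ → β} (hf : Function.Periodic f M) :
    ∑ i ∈ Icc (1 : ℤ) M, f (i + 1) = ∑ i ∈ Icc (1 : ℤ) M, f i := by
  have hshift : ∑ i ∈ Icc (1 : ℤ) M, f (i + 1) = ∑ i ∈ Icc (1 + 1 : ℤ) (M + 1), f i := by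
    rw [← map_add_right_Icc, sum_map]
    rfl
  apply add_left_cancel (a := f 1)
  calc f 1 + ∑ i ∈ Icc (1 : ℤ) M, f (i + 1)
      = ∑ i ∈ Icc (1 : ℤ) (M + 1), f i := by
        rw [hshift, ← sum_insert (by simp), insert_Icc_add_one_left_eq_Icc (by omega)]
    _ = f (M + 1) + ∑ i ∈ Icc (1 : ℤ) M, f i := by
        rw [← sum_insert (by simp), insert_Icc_right_eq_Icc_add_one (by omega)]
    _ = f 1 + ∑ i ∈ Icc (1 : ℤ) M, f i := by rw [add_comm (M : ℤ), hf]

theorem sum_Icc_eq_zero_of_eq_sub {β : Type*} [AddCommGroup β] {M : ℕ} {f g : ℤ → β}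
    (hf : Function.Periodic f M) (hg : ∀ i, g i = f (i + 1) - f i) :
    ∑ i ∈ Icc (1 : ℤ) M, g i = 0 := by
  simp only [hg, sum_sub_distrib, sum_Icc_comp_add_one_of_periodic hf, sub_self]

section GridPairings

variable {M : ℕ} {h : ℝ} {a b u w y : ℤ → ℝ}

theorem Periodic.comp_sub_one (hu : Periodic M u) : Periodic M (fun i => u (i - 1)) :=
  Function.Periodic.sub_const hu 1

protected theorem Periodic.half (ha : Periodic M a) (hb : Periodic M b) :
    Periodic M (half a b) :=
  fun i => by simp only [half, ha i, hb i]

protected theorem Periodic.Dx (hu : Periodic M u) : Periodic M (Dx h u) := fun i => by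
  simp only [Dx, add_right_comm i (M : ℤ), hu.comp_sub_one i, hu (i + 1)]

theorem ip_comm (a b : ℤ → ℝ) : ip M h a b = ip M h b a := by
  simp only [ip, mul_comm (a _)]

theorem ip_half_left (a b c : ℤ → ℝ) :
    ip M h (half a b) c = (ip M h a c + ip M h b c) / 2 := by
  simp only [ip, half]
  rw [← mul_add, ← sum_add_distrib, mul_div_assoc, sum_div]
  exact congrArg _ (sum_congr rfl fun i _ => by ring)

theorem ip_sub_right (a b c : ℤ → ℝ) : ip M h a (b - c) = ip M h a b - ip M h a c := by
  simp only [ip, Pi.sub_apply, mul_sub, sum_sub_distrib]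

theorem ip_half_sub (a b : ℤ → ℝ) :
    ip M h (half a b) (b - a) = (ip M h b b - ip M h a a) / 2 := by
  rw [ip_sub_right, ip_half_left, ip_half_left, ip_comm a b]
  ring

theorem ip_Dx_right (ha : Periodic M a) (hb : Periodic M b) :
    ip M h a (Dx h b) = -ip M h (Dx h a) b := by
  have hr : Function.Periodic (fun i => (a i * b (i - 1) + a (i - 1) * b i) / (2 * h)) M :=
    fun i => by simp only [ha i, hb i, ha.comp_sub_one i, hb.comp_sub_one i]
  rw [eq_neg_iff_add_eq_zero, ip, ip, ← mul_add, ← sum_add_distrib,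
    sum_Icc_eq_zero_of_eq_sub hr, mul_zero]
  intro i
  simp only [Dx, add_sub_cancel_right]
  ring

theorem ip_Dx_self (ha : Periodic M a) : ip M h a (Dx h a) = 0 := by
  linarith [ip_Dx_right (h := h) ha ha, ip_comm (M := M) (h := h) a (Dx h a)]

theorem ip_dxx_right (ha : Periodic M a) (hb : Periodic M b) :
    ip M h a (dxx h b) = -dip M h a b := by
  have hr : Function.Periodic (fun i => a (i - 1) * (b i - b (i - 1)) / h ^ 2) M :=
    fun i => by simp only [hb i, ha.comp_sub_one i, hb.comp_sub_one i]
  rw [eq_neg_iff_add_eq_zero, ip, dip, ← mul_add, ← sum_add_distrib,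
    sum_Icc_eq_zero_of_eq_sub hr, mul_zero]
  intro i
  simp only [dxx, dxm, add_sub_cancel_right]
  ring

theorem dip_comm (a b : ℤ → ℝ) : dip M h a b = dip M h b a := by
  simp only [dip, mul_comm (dxm h a _)]

theorem ip_dxx_symm (ha : Periodic M a) (hb : Periodic M b) :
    ip M h a (dxx h b) = ip M h b (dxx h a) := by
  rw [ip_dxx_right ha hb, ip_dxx_right hb ha, dip_comm]

theorem ip_psi_self (hw : Periodic M w) (hy : Periodic M y) : ip M h y (psi h w y) = 0 := by
  have hr : Function.Periodic
      (fun i => (w i * y i * y (i - 1) + w (i - 1) * y (i - 1) * y i) / (6 * h)) M :=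
    fun i => by simp only [hw i, hy i, hw.comp_sub_one i, hy.comp_sub_one i]
  rw [ip, sum_Icc_eq_zero_of_eq_sub hr, mul_zero]
  intro i
  simp only [psi, Dx, add_sub_cancel_right]
  ring

end GridPairings

-- `(1 + (h²/12) δ_x²) v = δ_x² u`: `v` is the fourth-order compact approximation of `u_xx`.
def IsCompactLaplacian (h : ℝ) (u v : ℤ → ℝ) : Prop :=
  ∀ i, v i = dxx h u i - h ^ 2 / 12 * dxx h v i

noncomputable def compactSeminormSq (M : ℕ) (h : ℝ) (u v : ℤ → ℝ) : ℝ :=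
  dip M h u u + h ^ 2 / 12 * ip M h v v - h ^ 4 / 144 * dip M h v v

namespace IsCompactLaplacian

variable {M : ℕ} {h : ℝ} {a b c d u v : ℤ → ℝ}

protected theorem half (hac : IsCompactLaplacian h a c) (hbd : IsCompactLaplacian h b d) :
    IsCompactLaplacian h (half a b) (half c d) := fun i => by
  have e₁ := hac i
  have e₂ := hbd i
  simp only [half, dxx] at e₁ e₂ ⊢
  linear_combination (e₁ + e₂) / 2

protected theorem Dx (huv : IsCompactLaplacian h u v) :
    IsCompactLaplacian h (Dx h u) (Dx h v) := fun i => by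
  have e₁ := huv (i + 1)
  have e₂ := huv (i - 1)
  simp only [Dx, dxx, sub_add_cancel, add_sub_cancel_right] at e₁ e₂ ⊢
  linear_combination (e₁ - e₂) / (2 * h)

theorem ip_eq (huv : IsCompactLaplacian h u v) (a : ℤ → ℝ) :
    ip M h a v = ip M h a (dxx h u) - h ^ 2 / 12 * ip M h a (dxx h v) := by
  simp only [ip, mul_sum, ← sum_sub_distrib]
  exact sum_congr rfl fun i _ => by rw [huv i]; ring

theorem ip_dxx_eq (huv : IsCompactLaplacian h u v) (a : ℤ → ℝ) :
    ip M h a (dxx h u) = ip M h a v + h ^ 2 / 12 * ip M h a (dxx h v) := by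
  rw [huv.ip_eq]
  ring

theorem ip_symm (hac : IsCompactLaplacian h a c) (hbd : IsCompactLaplacian h b d)
    (ha : Periodic M a) (hb : Periodic M b) (hc : Periodic M c) (hd : Periodic M d) :
    ip M h a d = ip M h c b := by
  set k := h ^ 2 / 12
  calc ip M h a d
      = ip M h a d + k * (ip M h d c + k * ip M h d (dxx h c))
          - k * (ip M h c d + k * ip M h c (dxx h d)) := by
        rw [ip_dxx_symm hc hd, ip_comm d c]; ring
    _ = ip M h a (dxx h b) - k * ip M h c (dxx h b) := by
        rw [hbd.ip_dxx_eq, hbd.ip_dxx_eq, ip_dxx_symm ha hd, hac.ip_dxx_eq]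
    _ = ip M h b (dxx h a) - k * ip M h b (dxx h c) := by
        rw [ip_dxx_symm hb ha, ip_dxx_symm hb hc]
    _ = ip M h c b := by rw [← hac.ip_eq, ip_comm]

theorem ip_self (huv : IsCompactLaplacian h u v) (hu : Periodic M u) (hv : Periodic M v) :
    ip M h u v = -compactSeminormSq M h u v := by
  rw [huv.ip_eq, ip_dxx_right hu hu, ip_dxx_symm hu hv, huv.ip_dxx_eq,
    ip_dxx_right hv hv, compactSeminormSq]
  ring

theorem ip_Dx_eq_zero (huv : IsCompactLaplacian h u v) (hu : Periodic M u) (hv : Periodic M v) :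
    ip M h u (Dx h v) = 0 := by
  have hsymm := huv.ip_symm huv.Dx hu hu.Dx hv hv.Dx
  have hskew := ip_Dx_right (h := h) hv hu
  rw [ip_comm (Dx h v)] at hskew
  linarith

theorem ip_half_sub (hac : IsCompactLaplacian h a c) (hbd : IsCompactLaplacian h b d)
    (ha : Periodic M a) (hb : Periodic M b) (hc : Periodic M c) (hd : Periodic M d) :
    ip M h (half a b) (d - c) = (compactSeminormSq M h a c - compactSeminormSq M h b d) / 2 := by
  rw [ip_sub_right, ip_half_left, ip_half_left, hac.ip_self ha hc, hbd.ip_self hb hd,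
    hac.ip_symm hbd ha hb hc hd, ip_comm c b]
  ring

end IsCompactLaplacian

section Energy

variable {M N : ℕ} {h τ μ γ κ ν : ℝ}

theorem nrm_sq (hh : 0 ≤ h) (u : ℤ → ℝ) : nrm M h u ^ 2 = ip M h u u :=
  Real.sq_sqrt (mul_nonneg hh (sum_nonneg fun _ _ => mul_self_nonneg _))

theorem snorm_sq (hh : 0 ≤ h) (u : ℤ → ℝ) : snorm M h u ^ 2 = dip M h u u :=
  Real.sq_sqrt (mul_nonneg hh (sum_nonneg fun _ _ => mul_self_nonneg _))

theorem energyE_eq (hh : 0 ≤ h) (u v : ℕ → ℤ → ℝ) (k : ℕ) :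
    energyE M h τ μ ν u v k =
      (ip M h (u (k + 1)) (u (k + 1)) + ip M h (u k) (u k)) / 2
        + 2 * ν * τ * ∑ l ∈ Icc 1 k,
            compactSeminormSq M h (half (u (l - 1)) (u (l + 1))) (half (v (l - 1)) (v (l + 1)))
        + μ / 2 * (compactSeminormSq M h (u (k + 1)) (v (k + 1))
            + compactSeminormSq M h (u k) (v k)) := by
  simp only [energyE, nrm_sq hh, snorm_sq hh, compactSeminormSq]
  ring

theorem energy_balance {u₀ u₁ u₂ v₀ v₁ v₂ : ℤ → ℝ} (hτ : τ ≠ 0)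
    (hu₀ : Periodic M u₀) (hu₁ : Periodic M u₁) (hu₂ : Periodic M u₂)
    (hv₀ : Periodic M v₀) (hv₁ : Periodic M v₁) (hv₂ : Periodic M v₂)
    (hc₀ : IsCompactLaplacian h u₀ v₀) (hc₂ : IsCompactLaplacian h u₂ v₂)
    (hscheme : ∀ i, (u₂ i - u₀ i) / (2 * τ) - μ * (v₂ i - v₀ i) / (2 * τ)
      + γ * (psi h u₁ (half u₀ u₂) i - h ^ 2 / 2 * psi h v₁ (half u₀ u₂) i)
      + κ * (Dx h (half u₀ u₂) i - h ^ 2 / 6 * Dx h (half v₀ v₂) i)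
      - ν * half v₀ v₂ i = 0) :
    ip M h u₂ u₂ - ip M h u₀ u₀
      + μ * (compactSeminormSq M h u₂ v₂ - compactSeminormSq M h u₀ v₀)
      + 4 * τ * ν * compactSeminormSq M h (half u₀ u₂) (half v₀ v₂) = 0 := by
  set ua := half u₀ u₂
  set va := half v₀ v₂
  have hua : Periodic M ua := hu₀.half hu₂
  have hva : Periodic M va := hv₀.half hv₂
  have hca : IsCompactLaplacian h ua va := hc₀.half hc₂
  -- the energy method: test the scheme against `2τ ua`
  have htest : ip M h ua (u₂ - u₀) - μ * ip M h ua (v₂ - v₀)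
      + 2 * τ * γ * ip M h ua (psi h u₁ ua) - τ * γ * h ^ 2 * ip M h ua (psi h v₁ ua)
      + 2 * τ * κ * ip M h ua (Dx h ua) - τ * κ * h ^ 2 / 3 * ip M h ua (Dx h va)
      - 2 * τ * ν * ip M h ua va = 0 := by
    have h0 := congrArg (fun F : ℤ → ℝ => ip M h ua (fun i => 2 * τ * F i)) (funext hscheme)
    simp only [ip, mul_zero, sum_const_zero] at h0
    rw [← h0]
    simp only [ip, Pi.sub_apply, mul_sum, ← sum_add_distrib, ← sum_sub_distrib]
    refine sum_congr rfl fun i _ => ?_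
    field_simp
    ring
  rw [ip_half_sub, hc₀.ip_half_sub hc₂ hu₀ hu₂ hv₀ hv₂, ip_psi_self hu₁ hua, ip_psi_self hv₁ hua,
    ip_Dx_self hua, hca.ip_Dx_eq_zero hua hva, hca.ip_self hua hva] at htest
  linear_combination 2 * htest

theorem energyE_succ {u v : ℕ → ℤ → ℝ} (hh : 0 ≤ h) (hτ : τ ≠ 0)
    (hscheme : SatisfiesScheme M N h τ μ γ κ ν u v) {k : ℕ} (hk : k + 2 ≤ N) :
    energyE M h τ μ ν u v (k + 1) = energyE M h τ μ ν u v k := by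
  obtain ⟨hper, hcompact, -, hstep⟩ := hscheme
  have hbal := energy_balance hτ (hper k (by omega)).1 (hper (k + 1) (by omega)).1
    (hper (k + 2) hk).1 (hper k (by omega)).2 (hper (k + 1) (by omega)).2 (hper (k + 2) hk).2
    (hcompact k (by omega)) (hcompact (k + 2) hk) (hstep (k + 1) (by omega) hk)
  rw [energyE_eq hh, energyE_eq hh, sum_Icc_succ_top (by omega)]
  simp only [Nat.add_sub_cancel]
  linear_combination hbal / 2

end Energy

theorem energy_conservation_general (M N : ℕ) (h τ μ γ κ ν : ℝ) (u v : ℕ → ℤ → ℝ)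
    (hh : 0 < h) (hτ : 0 < τ)
    (hscheme : SatisfiesScheme M N h τ μ γ κ ν u v) :
    ∀ k : ℕ, 1 ≤ k → k + 1 ≤ N →
      energyE M h τ μ ν u v k = energyE M h τ μ ν u v 0 := by
  intro k hk hkN
  induction k, hk using Nat.le_induction with
  | base => exact energyE_succ hh.le hτ.ne' hscheme hkN
  | succ k hk ih => rw [energyE_succ hh.le hτ.ne' hscheme hkN, ih (by omega)]

/-- Theorem 4.1, conservative invariant (22): `E(u^{k+1},u^k) = E(u¹,u⁰)`. -/
theorem energy_conservation (M N : ℕ) (h τ μ γ κ ν : ℝ) (u v : ℕ → ℤ → ℝ)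
    (hM : 0 < M) (hN : 2 ≤ N) (hh : 0 < h) (hτ : 0 < τ)
    (hscheme : SatisfiesScheme M N h τ μ γ κ ν u v) :
    ∀ k : ℕ, 1 ≤ k → k + 1 ≤ N →
      energyE M h τ μ ν u v k = energyE M h τ μ ν u v 0 :=
  energy_conservation_general M N h τ μ γ κ ν u v hh hτ hscheme

end BBMB
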